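/- The globalization functor Λ = KG ⊗_{G_par} −: K_par G-Mod → KG-Mod is exact; in particular it sends injective K_par G-module maps to injective KG-module maps. -/

import Mathlib

/-- The defining relations of Exel's semigroup `S(G)` of a group `G`:
`[1] = 1`, `[s⁻¹][s][t] = [s⁻¹][st]`, `[s][t][t⁻¹] = [st][t⁻¹]`. -/
inductive ExelRel (G : Type*) [Group G] : FreeMonoid G → FreeMonoid G → Prop
  | one : ExelRel G (FreeMonoid.of 1) 1
  | left (s t : G) : ExelRel G
      (FreeMonoid.of s⁻¹ * FreeMonoid.of s * FreeMonoid.of t)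
      (FreeMonoid.of s⁻¹ * FreeMonoid.of (s * t))
  | right (s t : G) : ExelRel G
      (FreeMonoid.of s * FreeMonoid.of t * FreeMonoid.of t⁻¹)
      (FreeMonoid.of (s * t) * FreeMonoid.of t⁻¹)

/-- The congruence on the free monoid on `G` generated by the Exel relations. -/
def ExelCon (G : Type*) [Group G] : Con (FreeMonoid G) := conGen (ExelRel G)

/-- Exel's semigroup (an inverse monoid) `S(G)` of the group `G`. -/
abbrev ExelMonoid (G : Type*) [Group G] := (ExelCon G).Quotient

/-- The canonical generator `[g]` of `S(G)`. -/
def ExelMonoid.of {G : Type*} [Group G] (g : G) : ExelMonoid G :=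
  (ExelCon G).mk' (FreeMonoid.of g)

/-- The idempotent `e_g := [g][g⁻¹]` in `S(G)`. -/
def ExelMonoid.e {G : Type*} [Group G] (g : G) : ExelMonoid G :=
  ExelMonoid.of g * ExelMonoid.of g⁻¹

/-- The partial group algebra `K_par G`: the semigroup `K`-algebra of Exel's semigroup. -/
abbrev KparG (K G : Type*) [CommRing K] [Group G] := MonoidAlgebra K (ExelMonoid G)

/-- The canonical generator `[g]` of `K_par G`. -/
noncomputable def pr (K : Type*) {G : Type*} [CommRing K] [Group G] (g : G) : KparG K G :=
  MonoidAlgebra.of K (ExelMonoid G) (ExelMonoid.of g)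

/-- The idempotent `e_g := [g][g⁻¹]` in `K_par G`. -/
noncomputable def eK (K : Type*) {G : Type*} [CommRing K] [Group G] (g : G) : KparG K G :=
  pr K g * pr K g⁻¹

open TensorProduct

/-- The group algebra `KG`. -/
abbrev KG (K G : Type*) [CommRing K] [Group G] := MonoidAlgebra K G

/-- The relation `KG`-submodule of `KG ⊗[K] M` defining `KG ⊗_{G_par} M` for a left
`K_par G`-module `M` with its induced partial action:
generated by the elements `g ⊗ [h]·m − gh ⊗ e_{h⁻¹}·m`. -/
noncomputable def glueRel (K G M : Type*) [CommRing K] [Group G]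
    [AddCommGroup M] [Module K M] [Module (KparG K G) M] [IsScalarTower K (KparG K G) M] :
    Submodule (KG K G) (KG K G ⊗[K] M) :=
  Submodule.span (KG K G) {w : KG K G ⊗[K] M | ∃ (g h : G) (m : M),
    w = MonoidAlgebra.of K G g ⊗ₜ[K] (pr K h • m) -
      MonoidAlgebra.of K G (g * h) ⊗ₜ[K] (eK K h⁻¹ • m)}

/-- The universal globalization `Λ(M) = KG ⊗_{G_par} M` of a left `K_par G`-module `M`. -/
noncomputable abbrev Glob (K G M : Type*) [CommRing K] [Group G]
    [AddCommGroup M] [Module K M] [Module (KparG K G) M] [IsScalarTower K (KparG K G) M] :=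
  KG K G ⊗[K] M ⧸ glueRel K G M

/-!
For `k ∈ G` the `K`-linear maps `coeff k : KG ⊗ M → M`, `g ⊗ m ↦ [k⁻¹g]·m`, vanish on the
gluing relations, and an element killed by all of them is itself a relation: modulo relations,
`w = ∑ g ⊗ m_g` is congruent to `a ⊗ coeff a w + ∑_{g ≠ a} g ⊗ (m_g - e_{g⁻¹a}·m_g)`, which has
smaller support. Thus `Λ(M)` embeds into `∏_G M` naturally in `M`, and `Λ` preserves injections.
The same support induction shows that an element all of whose coefficients lie in the image of
`f` is, modulo relations, in the image of `KG ⊗ f`, which gives exactness.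
-/

namespace MonoidAlgebra

variable (K : Type*) {G M : Type*} [CommRing K] [Monoid G] [AddCommGroup M] [Module K M]

theorem finsupp_sum_of_tmul_surjective :
    Function.Surjective fun c : G →₀ M => c.sum fun g m => of K G g ⊗ₜ[K] m := by
  let Φ : (G →₀ M) →ₗ[K] MonoidAlgebra K G ⊗[K] M :=
    Finsupp.lsum K fun g => TensorProduct.mk K (MonoidAlgebra K G) M (of K G g)
  suffices LinearMap.range Φ = ⊤ from fun w => LinearMap.range_eq_top.mp this w
  rw [eq_top_iff, ← TensorProduct.span_tmul_eq_top, Submodule.span_le]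
  rintro _ ⟨a, m, rfl⟩
  induction a using induction_on with
  | of g => exact ⟨Finsupp.single g m, by simp [Φ]⟩
  | add a b ha hb => rw [add_tmul]; exact add_mem ha hb
  | smul r a ha => rw [← smul_tmul']; exact Submodule.smul_mem _ r ha

end MonoidAlgebra

namespace ExelMonoid

variable {G : Type*} [Group G]

theorem mk'_eq_of_exelRel {a b : FreeMonoid G} (h : ExelRel G a b) :
    (ExelCon G).mk' a = (ExelCon G).mk' b :=
  (Con.eq _).mpr (ConGen.Rel.of _ _ h)

theorem of_one : of (1 : G) = 1 := by
  simpa [of] using mk'_eq_of_exelRel ExelRel.one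

theorem of_inv_mul_of_mul_of (s t : G) : of s⁻¹ * of s * of t = of s⁻¹ * of (s * t) := by
  simpa [of] using mk'_eq_of_exelRel (ExelRel.left s t)

theorem of_mul_of_mul_of_inv (s t : G) : of s * of t * of t⁻¹ = of (s * t) * of t⁻¹ := by
  simpa [of] using mk'_eq_of_exelRel (ExelRel.right s t)

theorem of_mul_of_inv_mul_of (t : G) : of t * of t⁻¹ * of t = of t := by
  simpa [of_one] using of_inv_mul_of_mul_of t⁻¹ t

theorem of_mul_of (s t : G) : of s * of t = of (s * t) * e t⁻¹ := by
  calc of s * of t = of s * of t * of t⁻¹ * of t := by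
        rw [mul_assoc (of s * of t), mul_assoc, ← mul_assoc (of t), of_mul_of_inv_mul_of]
    _ = of (s * t) * e t⁻¹ := by rw [of_mul_of_mul_of_inv, e, inv_inv, mul_assoc]

end ExelMonoid

section Generators

variable (K : Type*) {G : Type*} [CommRing K] [Group G]

theorem pr_one : pr K (1 : G) = 1 := by
  rw [pr, ExelMonoid.of_one, map_one]

theorem pr_mul_pr (s t : G) : pr K s * pr K t = pr K (s * t) * eK K t⁻¹ := by
  rw [pr, pr, ← map_mul, ExelMonoid.of_mul_of, map_mul, ExelMonoid.e, map_mul]; rfl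

theorem eK_one : eK K (1 : G) = 1 := by
  rw [eK, inv_one, pr_one, one_mul]

end Generators

namespace Glob

variable (K : Type*) {G : Type*} [CommRing K] [Group G]

noncomputable def translate (k : G) : KG K G →ₗ[K] KparG K G :=
  MonoidAlgebra.mapDomainLinearMap K K fun g => ExelMonoid.of (k⁻¹ * g)

theorem translate_of (k g : G) : translate K k (MonoidAlgebra.of K G g) = pr K (k⁻¹ * g) := by
  simp [translate, pr]

theorem translate_of_mul (k g : G) (a : KG K G) :
    translate K k (MonoidAlgebra.of K G g * a) = translate K (g⁻¹ * k) a := by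
  induction a using MonoidAlgebra.induction_on with
  | of h =>
    rw [← map_mul, translate_of, translate_of]
    congr 1
    group
  | add a b ha hb => rw [mul_add, map_add, map_add, ha, hb]
  | smul r a ha => rw [mul_smul_comm, map_smul, map_smul, ha]

variable {M : Type*} [AddCommGroup M] [Module K M] [Module (KparG K G) M]
  [IsScalarTower K (KparG K G) M]

noncomputable def coeff (k : G) : KG K G ⊗[K] M →ₗ[K] M :=
  TensorProduct.lift ((Algebra.lsmul K K M).toLinearMap ∘ₗ translate K k)

@[simp]
theorem coeff_tmul (k : G) (a : KG K G) (m : M) : coeff K k (a ⊗ₜ m) = translate K k a • m :=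
  rfl

theorem coeff_of_tmul (k g : G) (m : M) :
    coeff K k (MonoidAlgebra.of K G g ⊗ₜ m) = pr K (k⁻¹ * g) • m := by
  rw [coeff_tmul, translate_of]

theorem coeff_of_smul (k g : G) (w : KG K G ⊗[K] M) :
    coeff K k (MonoidAlgebra.of K G g • w) = coeff K (g⁻¹ * k) w := by
  induction w with
  | zero => simp
  | add w₁ w₂ h₁ h₂ => rw [smul_add, map_add, map_add, h₁, h₂]
  | tmul a m => rw [smul_tmul', smul_eq_mul, coeff_tmul, coeff_tmul, translate_of_mul]

variable (G M) in
noncomputable def coeffKer : Submodule (KG K G) (KG K G ⊗[K] M) where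
  carrier := {w | ∀ k, coeff K k w = 0}
  add_mem' h₁ h₂ k := by rw [map_add, h₁ k, h₂ k, add_zero]
  zero_mem' k := map_zero _
  smul_mem' a w hw := by
    induction a using MonoidAlgebra.induction_on with
    | of g => exact fun k => by rw [coeff_of_smul, hw]
    | add a b ha hb => exact fun k => by rw [add_smul, map_add, ha k, hb k, add_zero]
    | smul r a ha => exact fun k => by rw [smul_assoc, map_smul, ha k, smul_zero]

theorem glueRel_le_coeffKer : glueRel K G M ≤ coeffKer K G M := by
  rw [glueRel, Submodule.span_le]
  rintro _ ⟨g, h, m, rfl⟩ k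
  rw [map_sub, coeff_of_tmul, coeff_of_tmul, ← smul_assoc, smul_eq_mul, pr_mul_pr, mul_smul,
    mul_assoc, sub_self]

theorem sum_of_tmul_sub_mem_glueRel [DecidableEq G] (a : G) (s : Finset G) (m : G → M) :
    ∑ g ∈ s, MonoidAlgebra.of K G g ⊗ₜ m g
      - MonoidAlgebra.of K G a ⊗ₜ coeff K a (∑ g ∈ s, MonoidAlgebra.of K G g ⊗ₜ m g)
      - ∑ g ∈ s.erase a, MonoidAlgebra.of K G g ⊗ₜ (m g - eK K (g⁻¹ * a) • m g)
      ∈ glueRel K G M := by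
  have hterm (g : G) : MonoidAlgebra.of K G g ⊗ₜ[K] (eK K (g⁻¹ * a) • m g)
      - MonoidAlgebra.of K G a ⊗ₜ (pr K (a⁻¹ * g) • m g) ∈ glueRel K G M := by
    rw [← neg_mem_iff, neg_sub]
    refine Submodule.subset_span ⟨a, a⁻¹ * g, m g, ?_⟩
    rw [mul_inv_cancel_left, mul_inv_rev, inv_inv]
  rw [Finset.sum_erase _ (by rw [inv_mul_cancel, eK_one, one_smul, sub_self, tmul_zero])]
  convert Submodule.sum_mem _ fun g _ => hterm g using 1
  simp only [map_sum, coeff_of_tmul, tmul_sum, tmul_sub, Finset.sum_sub_distrib]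
  abel

variable {X Y : Type*} [AddCommGroup X] [Module K X] [Module (KparG K G) X]
  [IsScalarTower K (KparG K G) X] [AddCommGroup Y] [Module K Y] [Module (KparG K G) Y]
  [IsScalarTower K (KparG K G) Y]

noncomputable def tensorMap (ψ : X →ₗ[KparG K G] Y) : KG K G ⊗[K] X →ₗ[KG K G] KG K G ⊗[K] Y :=
  (ψ.restrictScalars K).baseChange (KG K G)

@[simp]
theorem tensorMap_tmul (ψ : X →ₗ[KparG K G] Y) (a : KG K G) (x : X) :
    tensorMap K ψ (a ⊗ₜ x) = a ⊗ₜ ψ x :=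
  rfl

theorem coeff_tensorMap (ψ : X →ₗ[KparG K G] Y) (k : G) (w : KG K G ⊗[K] X) :
    coeff K k (tensorMap K ψ w) = ψ (coeff K k w) := by
  induction w with
  | zero => simp
  | add w₁ w₂ h₁ h₂ => rw [map_add, map_add, map_add, h₁, h₂, map_add]
  | tmul a x => rw [tensorMap_tmul, coeff_tmul, coeff_tmul, map_smul]

theorem sum_mem_glueRel_sup_range_tensorMap (f : X →ₗ[KparG K G] Y) (s : Finset G) (m : G → Y)
    (hm : ∀ k, coeff K k (∑ g ∈ s, MonoidAlgebra.of K G g ⊗ₜ m g) ∈ LinearMap.range f) :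
    ∑ g ∈ s, MonoidAlgebra.of K G g ⊗ₜ m g ∈ glueRel K G Y ⊔ LinearMap.range (tensorMap K f) := by
  classical
  induction s using Finset.induction_on generalizing m with
  | empty => simp
  | insert a t ha ih =>
    have hreduce := sum_of_tmul_sub_mem_glueRel K a (insert a t) m
    rw [Finset.erase_insert ha] at hreduce
    set w := ∑ g ∈ insert a t, MonoidAlgebra.of K G g ⊗ₜ[K] m g
    set w' := ∑ g ∈ t, MonoidAlgebra.of K G g ⊗ₜ[K] (m g - eK K (g⁻¹ * a) • m g)
    obtain ⟨x, hx⟩ := hm a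
    have hw' : w' ∈ glueRel K G Y ⊔ LinearMap.range (tensorMap K f) := by
      refine ih _ fun k => ?_
      have hk := glueRel_le_coeffKer K hreduce k
      rw [map_sub, map_sub, coeff_of_tmul, sub_eq_zero] at hk
      rw [← hk]
      exact sub_mem (hm k) (Submodule.smul_mem _ _ (hm a))
    have hsplit : w = (w - MonoidAlgebra.of K G a ⊗ₜ coeff K a w - w')
        + (MonoidAlgebra.of K G a ⊗ₜ coeff K a w + w') := by abel
    rw [hsplit]
    refine add_mem (Submodule.mem_sup_left hreduce) (add_mem (Submodule.mem_sup_right ?_) hw')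
    exact ⟨MonoidAlgebra.of K G a ⊗ₜ x, by rw [tensorMap_tmul, hx]⟩

theorem mem_glueRel_sup_range_tensorMap (f : X →ₗ[KparG K G] Y) (w : KG K G ⊗[K] Y)
    (hw : ∀ k, coeff K k w ∈ LinearMap.range f) :
    w ∈ glueRel K G Y ⊔ LinearMap.range (tensorMap K f) := by
  obtain ⟨c, rfl⟩ := MonoidAlgebra.finsupp_sum_of_tmul_surjective K w
  exact sum_mem_glueRel_sup_range_tensorMap K f c.support c hw

theorem mem_glueRel_iff (w : KG K G ⊗[K] X) : w ∈ glueRel K G X ↔ ∀ k, coeff K k w = 0 := by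
  refine ⟨fun hw => glueRel_le_coeffKer K hw, fun hw => ?_⟩
  simpa [tensorMap] using
    mem_glueRel_sup_range_tensorMap K (0 : X →ₗ[KparG K G] X) w (by simpa using hw)

theorem glueRel_le_comap_tensorMap (ψ : X →ₗ[KparG K G] Y) :
    glueRel K G X ≤ (glueRel K G Y).comap (tensorMap K ψ) := by
  rw [glueRel, Submodule.span_le]
  rintro _ ⟨g, h, x, rfl⟩
  simp only [SetLike.mem_coe, Submodule.mem_comap, map_sub, tensorMap_tmul, map_smul]
  exact Submodule.subset_span ⟨g, h, ψ x, rfl⟩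

variable {K}

noncomputable def map (ψ : X →ₗ[KparG K G] Y) : Glob K G X →ₗ[KG K G] Glob K G Y :=
  Submodule.mapQ _ _ (tensorMap K ψ) (glueRel_le_comap_tensorMap K ψ)

theorem map_mk (ψ : X →ₗ[KparG K G] Y) (w : KG K G ⊗[K] X) :
    map ψ (Submodule.Quotient.mk w) = Submodule.Quotient.mk (tensorMap K ψ w) :=
  rfl

theorem eq_map_of_mk_tmul {ψ : X →ₗ[KparG K G] Y} {ψ' : Glob K G X →ₗ[KG K G] Glob K G Y}
    (hψ' : ∀ (a : KG K G) (x : X), ψ' (Submodule.Quotient.mk (a ⊗ₜ[K] x)) =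
      Submodule.Quotient.mk (a ⊗ₜ[K] ψ x)) :
    ψ' = map ψ :=
  Submodule.linearMap_qext _ (TensorProduct.AlgebraTensorModule.ext fun a x => hψ' a x)

theorem map_injective {ψ : X →ₗ[KparG K G] Y} (hψ : Function.Injective ψ) :
    Function.Injective (map ψ) := by
  refine (injective_iff_map_eq_zero _).mpr fun v hv => ?_
  obtain ⟨w, rfl⟩ := Submodule.Quotient.mk_surjective _ v
  rw [map_mk, Submodule.Quotient.mk_eq_zero, mem_glueRel_iff] at hv
  rw [Submodule.Quotient.mk_eq_zero, mem_glueRel_iff]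
  exact fun k => hψ (by rw [← coeff_tensorMap, hv k, map_zero])

theorem map_exact {Z : Type*} [AddCommGroup Z] [Module K Z] [Module (KparG K G) Z]
    [IsScalarTower K (KparG K G) Z] {f : X →ₗ[KparG K G] Y} {g : Y →ₗ[KparG K G] Z}
    (hfg : Function.Exact f g) : Function.Exact (map f) (map g) := by
  refine Function.Exact.of_comp_of_mem_range (funext fun v => ?_) fun v hv => ?_
  · obtain ⟨u, rfl⟩ := Submodule.Quotient.mk_surjective _ v
    rw [Function.comp_apply, map_mk, map_mk, Pi.zero_apply, Submodule.Quotient.mk_eq_zero,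
      mem_glueRel_iff]
    intro k
    rw [coeff_tensorMap, coeff_tensorMap, hfg.apply_apply_eq_zero]
  · obtain ⟨w, rfl⟩ := Submodule.Quotient.mk_surjective _ v
    rw [map_mk, Submodule.Quotient.mk_eq_zero, mem_glueRel_iff] at hv
    have hw : ∀ k, coeff K k w ∈ LinearMap.range f := fun k =>
      (hfg _).mp (by rw [← coeff_tensorMap, hv k])
    obtain ⟨r, hr, _, ⟨u, rfl⟩, hsum⟩ :=
      Submodule.mem_sup.mp (mem_glueRel_sup_range_tensorMap K f w hw)
    refine ⟨Submodule.Quotient.mk u, ?_⟩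
    rw [map_mk, ← hsum, Submodule.Quotient.mk_add, (Submodule.Quotient.mk_eq_zero _).mpr hr,
      zero_add]

end Glob

/-- The globalization functor `Λ = KG ⊗_{G_par} − : K_par G-Mod → KG-Mod` is exact:
every `K_par G`-module map `ψ : X → Y` induces a `KG`-module map
`ψ_* : Λ(X) → Λ(Y)`, `a ⊗ x ↦ a ⊗ ψ(x)`; `Λ` sends exact pairs to exact pairs, and in
particular it sends injective `K_par G`-module maps to injective `KG`-module maps. -/
theorem glob_functor_exact (K G : Type*) [CommRing K] [Group G]
    (X Y Z : Type*) [AddCommGroup X] [Module K X] [Module (KparG K G) X]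
    [IsScalarTower K (KparG K G) X] [AddCommGroup Y] [Module K Y] [Module (KparG K G) Y]
    [IsScalarTower K (KparG K G) Y] [AddCommGroup Z] [Module K Z] [Module (KparG K G) Z]
    [IsScalarTower K (KparG K G) Z] :
    (∀ ψ : X →ₗ[KparG K G] Y, ∃ ψ' : Glob K G X →ₗ[KG K G] Glob K G Y,
      ∀ (a : KG K G) (x : X), ψ' (Submodule.Quotient.mk (a ⊗ₜ[K] x)) =
        Submodule.Quotient.mk (a ⊗ₜ[K] ψ x)) ∧
    (∀ (ψ : X →ₗ[KparG K G] Y) (ψ' : Glob K G X →ₗ[KG K G] Glob K G Y),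
      (∀ (a : KG K G) (x : X), ψ' (Submodule.Quotient.mk (a ⊗ₜ[K] x)) =
        Submodule.Quotient.mk (a ⊗ₜ[K] ψ x)) →
      Function.Injective ψ → Function.Injective ψ') ∧
    (∀ (f : X →ₗ[KparG K G] Y) (g : Y →ₗ[KparG K G] Z)
      (f' : Glob K G X →ₗ[KG K G] Glob K G Y) (g' : Glob K G Y →ₗ[KG K G] Glob K G Z),
      (∀ (a : KG K G) (x : X), f' (Submodule.Quotient.mk (a ⊗ₜ[K] x)) =
        Submodule.Quotient.mk (a ⊗ₜ[K] f x)) →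
      (∀ (a : KG K G) (y : Y), g' (Submodule.Quotient.mk (a ⊗ₜ[K] y)) =
        Submodule.Quotient.mk (a ⊗ₜ[K] g y)) →
      Function.Exact f g → Function.Exact f' g') := by
  refine ⟨fun ψ => ⟨Glob.map ψ, fun _ _ => rfl⟩, ?_, ?_⟩
  · intro ψ ψ' hψ' hψ
    rw [Glob.eq_map_of_mk_tmul hψ']
    exact Glob.map_injective hψ
  · intro f g f' g' hf' hg' hfg
    rw [Glob.eq_map_of_mk_tmul hf', Glob.eq_map_of_mk_tmul hg']
    exact Glob.map_exact hfg
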